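/- arXiv:2502.18895 — 3 statements merged into one kernel-verified Lean document; each statement's English description precedes it below -/
import Mathlib

section
/- Let H be a finite-dimensional vector space with nondegenerate symmetric bilinear form η, and let S(z) = I + S_1 z^{-1} + S_2 z^{-2} + ⋯ ∈ End(H)[[z^{-1}]] satisfy the symplectic condition S*(-z)S(z) = I, where S*(z) is the η-adjoint. Then the series S*(z)S(w) - I ∈ End(H)[[z^{-1}, w^{-1}]] is divisible by (z^{-1} + w^{-1}); i.e., there exists W(z,w) = Σ_{k,l ≥ 0} W_{k,l} z^{-k} w^{-l} ∈ End(H)[[z^{-1}, w^{-1}]] with (z^{-1} + w^{-1})·W(z,w) = S*(z)S(w) - I. -/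
/-!
Write `A(x) = Σ Sadj_k x^k` and `B(y) = Σ S_l y^l`, so that the symplectic condition reads
`A(-t) B(t) = 1`. The series `F(x, y) = A(x) B(y) - 1` therefore vanishes on the antidiagonal
`y = -x`, and any two-variable series with coefficients in a module which vanishes there is
divisible by `x + y`: dividing `F` by `x + y` one variable at a time gives the explicit quotient
`W_{k,l} = Σ_{i ≤ k} (-1)^(k+i) F_{i, k+l+1-i}`.
-/

open Finset

section DivXAddY

variable (R : Type*) {M : Type*} [Ring R] [AddCommGroup M] [Module R M]

/-- The coefficients of `(x + y) W(x, y)`. -/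
def xAddYMul (W : ℕ → ℕ → M) (k l : ℕ) : M :=
  (if k = 0 then 0 else W (k - 1) l) + (if l = 0 then 0 else W k (l - 1))

/-- The coefficients of `c(-t, t)`. -/
def altAntidiagSum (c : ℕ → ℕ → M) (n : ℕ) : M :=
  ∑ i ∈ range (n + 1), (-1 : R) ^ i • c i (n - i)

def divXAddY (c : ℕ → ℕ → M) (k l : ℕ) : M :=
  ∑ i ∈ range (k + 1), (-1 : R) ^ (k + i) • c i (k + l + 1 - i)

variable {R}

theorem divXAddY_zero_left (c : ℕ → ℕ → M) (l : ℕ) : divXAddY R c 0 l = c 0 (l + 1) := by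
  simp [divXAddY]

theorem divXAddY_add_divXAddY_succ (c : ℕ → ℕ → M) (k l : ℕ) :
    divXAddY R c k (l + 1) + divXAddY R c (k + 1) l = c (k + 1) (l + 1) := by
  have hcancel : ∀ i ∈ range (k + 1),
      (-1 : R) ^ (k + i) • c i (k + (l + 1) + 1 - i)
        + (-1 : R) ^ (k + 1 + i) • c i (k + 1 + l + 1 - i) = 0 := by
    intro i _
    rw [show k + 1 + l + 1 - i = k + (l + 1) + 1 - i by omega, ← add_smul]
    simp [pow_add]
  rw [divXAddY, divXAddY, sum_range_succ _ (k + 1), ← add_assoc, ← sum_add_distrib,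
    sum_eq_zero hcancel, zero_add, show k + 1 + l + 1 - (k + 1) = l + 1 by omega,
    ← two_mul, pow_mul]
  simp

theorem divXAddY_zero_right (c : ℕ → ℕ → M) (k : ℕ) :
    divXAddY R c k 0 = c (k + 1) 0 + (-1 : R) ^ k • altAntidiagSum R c (k + 1) := by
  have hsign : (-1 : R) ^ (k + (k + 1)) = -1 := by
    rw [show k + (k + 1) = 2 * k + 1 by ring, pow_succ, pow_mul]
    simp
  simp only [divXAddY, altAntidiagSum, sum_range_succ _ (k + 1), Nat.sub_self, smul_add, smul_sum,
    smul_smul, ← pow_add, hsign, neg_one_smul, add_zero]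
  abel

theorem xAddYMul_divXAddY {c : ℕ → ℕ → M} (hc : ∀ n, altAntidiagSum R c n = 0) :
    xAddYMul (divXAddY R c) = c := by
  ext k l
  rcases k with _ | k <;> rcases l with _ | l
  · simpa [altAntidiagSum, xAddYMul] using (hc 0).symm
  · simp [xAddYMul, divXAddY_zero_left]
  · simp [xAddYMul, divXAddY_zero_right, hc]
  · simpa [xAddYMul] using divXAddY_add_divXAddY_succ c k l

end DivXAddY

theorem stmt13_general (K : Type*) [Field K] (H : Type*) [AddCommGroup H] [Module K H]
    (S Sadj : ℕ → Module.End K H)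
    (hsymp : ∀ n : ℕ,
      ∑ i ∈ Finset.range (n + 1), ((-1 : K) ^ i) • (Sadj i * S (n - i))
        = if n = 0 then 1 else 0) :
    ∃ W : ℕ → ℕ → Module.End K H, ∀ k l : ℕ,
      (if k = 0 then 0 else W (k - 1) l) + (if l = 0 then 0 else W k (l - 1))
        = Sadj k * S l - if k = 0 ∧ l = 0 then 1 else 0 := by
  set F : ℕ → ℕ → Module.End K H := fun k l => Sadj k * S l - if k = 0 ∧ l = 0 then 1 else 0
  have hF : ∀ n, altAntidiagSum K F n = 0 := by
    intro n
    simp only [altAntidiagSum, F, smul_sub, sum_sub_distrib, hsymp]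
    rw [sum_eq_single 0 (fun i _ hi => by simp [hi]) (by simp)]
    simp
  exact ⟨divXAddY K F, fun k l => congrFun₂ (xAddYMul_divXAddY hF) k l⟩

/-- For `S(z) = I + Σ_{n≥1} S_n z^{-n}` satisfying the symplectic condition
`S*(-z)S(z) = I` (with `Sadj n` the `η`-adjoint of `S n`), the series
`S*(z)S(w) - I` is divisible by `z⁻¹ + w⁻¹`: there exists
`W(z,w) = Σ_{k,l≥0} W_{k,l} z^{-k} w^{-l}` with
`(z⁻¹ + w⁻¹)·W(z,w) = S*(z)S(w) - I`, stated coefficientwise. -/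
theorem stmt13 (K : Type*) [Field K] (H : Type*) [AddCommGroup H] [Module K H]
    [FiniteDimensional K H]
    (η : LinearMap.BilinForm K H) (hsymm : η.IsSymm) (hnd : η.Nondegenerate)
    (S Sadj : ℕ → Module.End K H) (hS0 : S 0 = 1)
    (hadj : ∀ n : ℕ, ∀ x y : H, η (Sadj n x) y = η x (S n y))
    (hsymp : ∀ n : ℕ,
      ∑ i ∈ Finset.range (n + 1), ((-1 : K) ^ i) • (Sadj i * S (n - i))
        = if n = 0 then 1 else 0) :
    ∃ W : ℕ → ℕ → Module.End K H, ∀ k l : ℕ,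
      (if k = 0 then 0 else W (k - 1) l) + (if l = 0 then 0 else W k (l - 1))
        = Sadj k * S l - if k = 0 ∧ l = 0 then 1 else 0 :=
  stmt13_general K H S Sadj hsymp
end

section
/- Let H be a 2-dimensional ℚ-vector space with basis φ_0, φ_1; let μ(φ_a) = (1/2 - a)·φ_a and let ρ ∈ End(H) with ρ(φ_0) = 0, ρ(φ_1) = 2φ_0. Define D on H-valued Laurent polynomials by D(φ z^k) = ρ(φ)z^k + (μ + 3/2)(φ)z^{k+1} + k·φ z^{k+1}. Then for all m ≥ -1, integers k ≥ 0 and a ∈ {0,1}: D^{m+1}(φ_a z^k) = (k+2-a)(k+3-a)⋯(k+2-a+m)·φ_a z^{k+m+1} + 2δ_{a,1}·Σ_{i=1}^{m+1}((k+1)(k+2)⋯(k+1+m)/(k+i))·φ_0 z^{k+m}. -/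
/-- The operator `D(φ z^k) = ρ(φ)z^k + (μ + 3/2)(φ)z^(k+1) + k·φ z^(k+1)` of the
extended dessins d'enfants theory (with `μ φ_a = (1/2 - a)·φ_a`, `ρ φ₀ = 0`,
`ρ φ₁ = 2φ₀`), acting coefficientwise: `F j` is the pair of `(φ₀, φ₁)`-coefficients
of `z^j`. -/
noncomputable def eGddD (F : ℤ → ℚ × ℚ) : ℤ → ℚ × ℚ :=
  fun j => (2 * (F j).2 + ((j : ℚ) + 1) * (F (j - 1)).1, (j : ℚ) * (F (j - 1)).2)

/-- The monomial `φ_a z^k`. -/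
def eGddMono (a : ℕ) (k : ℤ) : ℤ → ℚ × ℚ :=
  fun j => if j = k then (if a = 0 then ((1 : ℚ), (0 : ℚ)) else ((0 : ℚ), (1 : ℚ))) else 0


/-!
`D` is additive and maps `x φ₀ z^k + y φ₁ z^k` to `2y φ₀ z^k + ((k+2)x φ₀ + (k+1)y φ₁) z^(k+1)`.
So `φ₀ z^k` climbs a ladder picking up the factors `k+2, k+3, …`, while `φ₁ z^k` climbs with
`k+1, k+2, …` and sheds `2 P_n φ₀` one degree lower at every step, `P_n = (k+1)_n`. The resulting
`φ₀`-coefficient `2 S_n` obeys `S_{n+1} = (k+n+1) S_n + P_n`, the product rule for `S_n = P_n'(k)`,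
which is solved by `S_n = Σ_{i=1}^n P_n / (k+i)`.
-/

open Finset

lemma eGddMono_eq_single (a : ℕ) (k : ℤ) :
    eGddMono a k = Pi.single k (if a = 0 then ((1 : ℚ), (0 : ℚ)) else ((0 : ℚ), (1 : ℚ))) := by
  funext j
  simp [eGddMono, Pi.single_apply]

lemma eGddD_add (F G : ℤ → ℚ × ℚ) : eGddD (F + G) = eGddD F + eGddD G := by
  funext j
  ext <;> simp only [eGddD, Pi.add_apply, Prod.fst_add, Prod.snd_add] <;> ring

lemma eGddD_single (k : ℤ) (x y : ℚ) :
    eGddD (Pi.single k (x, y))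
      = Pi.single k (2 * y, 0) + Pi.single (k + 1) (((k : ℚ) + 2) * x, ((k : ℚ) + 1) * y) := by
  funext j
  by_cases hk : j = k
  · subst hk
    simp [eGddD]
  by_cases hk1 : j = k + 1
  · subst hk1
    simp only [eGddD, Pi.add_apply, Pi.single_eq_same, Pi.single_eq_of_ne hk, add_sub_cancel_right,
      Prod.snd_zero, mul_zero, zero_add]
    push_cast
    rw [add_assoc, one_add_one_eq_two]
  · have hk_pred : j - 1 ≠ k := by omega
    simp [eGddD, hk, hk1, hk_pred]

lemma eGddD_iterate_single_one_zero (k : ℤ) (n : ℕ) :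
    eGddD^[n] (Pi.single k (1, 0))
      = Pi.single (k + n) (∏ i ∈ range n, ((k : ℚ) + 2 + i), 0) := by
  induction n with
  | zero => simp
  | succ n ih =>
    rw [Function.iterate_succ_apply', ih, eGddD_single]
    simp only [mul_zero, Prod.mk_zero_zero, Pi.single_zero, zero_add, prod_range_succ,
      Nat.cast_succ, ← add_assoc]
    congr 2
    push_cast
    ring

/-- The sum is the derivative in `x` of `∏ t < n, (x + 1 + t)`; this is the product rule. -/
lemma sum_prod_range_div_succ {K : Type*} [Field K] (x : K) (n : ℕ) (hx : x + n + 1 ≠ 0) :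
    ∑ i ∈ Icc 1 (n + 1), (∏ t ∈ range (n + 1), (x + 1 + t)) / (x + i)
      = (x + n + 1) * ∑ i ∈ Icc 1 n, (∏ t ∈ range n, (x + 1 + t)) / (x + i)
        + ∏ t ∈ range n, (x + 1 + t) := by
  rw [sum_Icc_succ_top (by omega), prod_range_succ, mul_sum]
  congr 1
  · exact sum_congr rfl fun i _ => by ring
  · push_cast
    rw [show x + (n + 1) = x + 1 + n by ring, mul_div_cancel_right₀ _ (by rwa [← add_right_comm] at hx)]

lemma eGddD_iterate_single_zero_one (k n : ℕ) :
    eGddD^[n] (Pi.single (k : ℤ) (0, 1))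
      = Pi.single ((k : ℤ) + n - 1)
          (2 * ∑ i ∈ Icc 1 n, (∏ t ∈ range n, ((k : ℚ) + 1 + t)) / ((k : ℚ) + i), 0)
        + Pi.single ((k : ℤ) + n) (0, ∏ t ∈ range n, ((k : ℚ) + 1 + t)) := by
  induction n with
  | zero => simp
  | succ n ih =>
    rw [Function.iterate_succ_apply', ih, eGddD_add, eGddD_single, eGddD_single,
      sum_prod_range_div_succ (k : ℚ) n (by positivity), prod_range_succ]
    have hpred : (k : ℤ) + n - 1 + 1 = k + n := by ring
    simp only [hpred, mul_zero, Prod.mk_zero_zero, Pi.single_zero, zero_add, ← add_assoc,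
      ← Pi.single_add, Prod.mk_add_mk, add_zero, Nat.cast_succ, ← add_assoc]
    congr 3 <;> push_cast <;> ring

/-- `D^(m+1)(φ_a z^k) = (k+2-a)_{m+1}·φ_a z^(k+m+1)
      + 2δ_{a,1}·Σ_{i=1}^{m+1} ((k+1)_{m+1}/(k+i))·φ₀ z^(k+m)` for `m ≥ -1`, `k ≥ 0`. -/
theorem stmt16 (m : ℤ) (hm : -1 ≤ m) (k : ℕ) (a : ℕ) (ha : a ≤ 1) :
    eGddD^[(m + 1).toNat] (eGddMono a (k : ℤ))
      = fun j =>
        (if j = (k : ℤ) + m + 1 then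
            (∏ i ∈ Finset.range (m + 1).toNat, ((k : ℚ) + 2 - (a : ℚ) + (i : ℚ)))
              • (if a = 0 then ((1 : ℚ), (0 : ℚ)) else ((0 : ℚ), (1 : ℚ)))
          else 0)
        + (if j = (k : ℤ) + m then
            ((if a = 1 then (2 : ℚ) else 0)
                * ∑ i ∈ Finset.Icc 1 (m + 1).toNat,
                    (∏ t ∈ Finset.range (m + 1).toNat, ((k : ℚ) + 1 + (t : ℚ)))
                      / ((k : ℚ) + (i : ℚ)))
              • ((1 : ℚ), (0 : ℚ))
          else 0) := by
  obtain ⟨n, rfl⟩ : ∃ n : ℕ, m = n - 1 := ⟨(m + 1).toNat, by omega⟩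
  have hn : (n - 1 + 1 : ℤ).toNat = n := by omega
  have hsucc : (k : ℤ) + (n - 1) + 1 = k + n := by ring
  have hpred : (k : ℤ) + (n - 1) = k + n - 1 := by ring
  rw [hn, hsucc, hpred, eGddMono_eq_single]
  funext j
  interval_cases a
  · rw [if_pos rfl, eGddD_iterate_single_one_zero]
    simp [Pi.single_apply]
  · have hshift : (k : ℚ) + 2 - 1 = k + 1 := by ring
    rw [if_neg one_ne_zero, eGddD_iterate_single_zero_one, Pi.add_apply, add_comm]
    simp [Pi.single_apply, hshift]
end

section
/- Let H be a finite-dimensional complex vector space, μ ∈ End(H) diagonalizable (in some basis μφ_a = μ_a φ_a), δ a scalar, and (ρ_i)_{i≥0} endomorphisms satisfying μρ_i = ρ_i(μ + i + 1) for all i. Suppose vectors u_0, u_1, ..., u_n ∈ H satisfy the recursion (k + μ + δ/2)u_k = -Σ_{i=0}^{n-k-1} ρ_i u_{k+i+1} for k = 0, 1, ..., n (so in particular (n + μ + δ/2)u_n = 0). Then (k + μ + δ/2)u_k = 0 for every k = 0, ..., n, and consequently Σ_{i=0}^{n-k-1} ρ_i u_{k+i+1} = 0 for every k; i.e., setting u(z)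 = Σ_{k=0}^n u_k z^k, one has (z∂_z + μ + δ/2)u(z) = 0 and the nonnegative-power part of ρ(z)u(z) (with ρ(z) = Σ_i ρ_i z^{-i}) vanishes in degrees ≥ 1. -/
/-!
Write `T k = k + μ + δ/2`. The relation `μ ρ_i = ρ_i (μ + i + 1)` says `T k ρ_i = ρ_i T (k+i+1)`,
so applying `T k` to the recursion and using `T (k+i+1) u_{k+i+1} = 0` (downward induction on `k`)
gives `(T k)² u_k = 0`. Since `μ`, hence `T k`, is diagonalizable, its generalized eigenspaces are
eigenspaces, so already `T k u_k = 0`.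
-/

open Finset

namespace Module.End

variable {R M : Type*} [CommRing R] [IsDomain R] [AddCommGroup M] [Module R M] [IsTorsionFree R M]
  {f : End R M}

theorem maxGenEigenspace_eq_eigenspace_of_iSup_eigenspace_eq_top
    (hf : ⨆ c, f.eigenspace c = ⊤) (a : R) : f.maxGenEigenspace a = f.eigenspace a := by
  refine le_antisymm (le_of_eq ?_) eigenspace_le_maxGenEigenspace
  have hdisj : f.maxGenEigenspace a ⊓ ⨆ (c) (_ : c ≠ a), f.eigenspace c = ⊥ :=
    ((f.independent_maxGenEigenspace a).mono_right
      (iSup₂_mono fun _ _ ↦ eigenspace_le_maxGenEigenspace)).eq_bot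
  calc f.maxGenEigenspace a
      = (f.eigenspace a ⊔ ⨆ (c) (_ : c ≠ a), f.eigenspace c) ⊓ f.maxGenEigenspace a := by
        rw [← iSup_split_single, hf, top_inf_eq]
    _ = f.eigenspace a := by
        rw [sup_inf_assoc_of_le _ eigenspace_le_maxGenEigenspace, inf_comm, hdisj, sup_bot_eq]

theorem add_smul_one_apply_eq_zero_of_sq_of_iSup_eigenspace_eq_top
    (hf : ⨆ c, f.eigenspace c = ⊤) (c : R) {x : M}
    (hx : (f + c • 1) ((f + c • 1) x) = 0) : (f + c • 1) x = 0 := by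
  have hmem : x ∈ f.genEigenspace (-c) (2 : ℕ) := by
    rw [mem_genEigenspace_nat, LinearMap.mem_ker, neg_smul, sub_neg_eq_add, sq, mul_apply]
    exact hx
  have := (maxGenEigenspace_eq_eigenspace_of_iSup_eigenspace_eq_top hf (-c)).le
    (genEigenspace_le_maximal f (-c) 2 hmem)
  rw [mem_eigenspace_iff] at this
  simp [this]

end Module.End

theorem apply_eq_zero_of_eq_neg_sum {R M : Type*} [Semiring R] [AddCommGroup M] [Module R M]
    {T ρ : ℕ → Module.End R M} (hT : ∀ k x, T k (T k x) = 0 → T k x = 0)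
    (hTρ : ∀ k i x, T k (ρ i x) = ρ i (T (k + i + 1) x)) {n : ℕ} {u : ℕ → M}
    (hrec : ∀ k ≤ n, T k (u k) = -∑ i ∈ range (n - k), ρ i (u (k + i + 1))) :
    ∀ k ≤ n, T k (u k) = 0 := by
  intro k hk
  induction h : n - k using Nat.strong_induction_on generalizing k with
  | _ m ih =>
    apply hT
    rw [hrec k hk, map_neg, map_sum, neg_eq_zero]
    refine sum_eq_zero fun i hi ↦ ?_
    have hi := mem_range.mp hi
    rw [hTρ, ih (n - (k + i + 1)) (by omega) _ (by omega) rfl, map_zero]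

theorem stmt17_general (H : Type*) [AddCommGroup H] [Module ℂ H]
    (μ : Module.End ℂ H) (hdiag : (⨆ c : ℂ, Module.End.eigenspace μ c) = ⊤)
    (δ : ℂ) (ρ : ℕ → Module.End ℂ H)
    (hρ : ∀ i : ℕ, ∀ x : H, μ (ρ i x) = ρ i (μ x) + ((i : ℂ) + 1) • ρ i x)
    (n : ℕ) (u : ℕ → H)
    (hrec : ∀ k : ℕ, k ≤ n →
      (k : ℂ) • u k + μ (u k) + (δ / 2) • u k
        = -∑ i ∈ Finset.range (n - k), ρ i (u (k + i + 1))) :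
    (∀ k : ℕ, k ≤ n → (k : ℂ) • u k + μ (u k) + (δ / 2) • u k = 0)
      ∧ ∀ k : ℕ, k ≤ n → ∑ i ∈ Finset.range (n - k), ρ i (u (k + i + 1)) = 0 := by
  set T : ℕ → Module.End ℂ H := fun k ↦ μ + ((k : ℂ) + δ / 2) • 1
  have hT : ∀ k x, T k x = (k : ℂ) • x + μ x + (δ / 2) • x := fun k x ↦ by
    simp only [T, LinearMap.add_apply, LinearMap.smul_apply, Module.End.one_apply, add_smul]
    abel
  have hTρ : ∀ k i x, T k (ρ i x) = ρ i (T (k + i + 1) x) := fun k i x ↦ by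
    simp only [hT, hρ, map_add, map_smul]
    push_cast
    module
  have hhom : ∀ k ≤ n, (k : ℂ) • u k + μ (u k) + (δ / 2) • u k = 0 := by
    simpa only [hT] using apply_eq_zero_of_eq_neg_sum (T := T) (u := u)
      (fun k _ ↦ μ.add_smul_one_apply_eq_zero_of_sq_of_iSup_eigenspace_eq_top hdiag _) hTρ
      (by simpa only [hT] using hrec)
  exact ⟨hhom, fun k hk ↦ neg_eq_zero.mp ((hrec k hk).symm.trans (hhom k hk))⟩

/-- Downward-induction consequence of the homogeneity of the `J`-function: if `μ` is
diagonalizable, `μρ_i = ρ_i(μ + i + 1)`, and the vectors `u_0, ..., u_n` satisfy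
`(k + μ + δ/2)u_k = -Σ_{i=0}^{n-k-1} ρ_i u_{k+i+1}`, then `(k + μ + δ/2)u_k = 0`
for every `k ≤ n`, and consequently `Σ_{i=0}^{n-k-1} ρ_i u_{k+i+1} = 0` for every
`k ≤ n` (i.e. `(z∂_z + μ + δ/2)u(z) = 0` and `[ρ(z)u(z)]` has no positive powers). -/
theorem stmt17 (H : Type*) [AddCommGroup H] [Module ℂ H] [FiniteDimensional ℂ H]
    (μ : Module.End ℂ H) (hdiag : (⨆ c : ℂ, Module.End.eigenspace μ c) = ⊤)
    (δ : ℂ) (ρ : ℕ → Module.End ℂ H)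
    (hρ : ∀ i : ℕ, ∀ x : H, μ (ρ i x) = ρ i (μ x) + ((i : ℂ) + 1) • ρ i x)
    (n : ℕ) (u : ℕ → H)
    (hrec : ∀ k : ℕ, k ≤ n →
      (k : ℂ) • u k + μ (u k) + (δ / 2) • u k
        = -∑ i ∈ Finset.range (n - k), ρ i (u (k + i + 1))) :
    (∀ k : ℕ, k ≤ n → (k : ℂ) • u k + μ (u k) + (δ / 2) • u k = 0)
      ∧ ∀ k : ℕ, k ≤ n → ∑ i ∈ Finset.range (n - k), ρ i (u (k + i + 1)) = 0 :=
  stmt17_general H μ hdiag δ ρ hρ n u hrec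
end
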